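/- arXiv:1709.04039 — 9 statements merged into one kernel-verified Lean document; each statement's English description precedes it below -/
import Mathlib

section
/- For any prime p with p ≡ 1 (mod 3), and any a ≥ 1, the sum ∑_{n=0}^{p^a - 1} C(2n, n) is congruent to 1 modulo p. -/
/-!
Working in `ZMod p`, Lucas' theorem gives `C(2(pq + r), pq + r) ≡ C(2q, q) C(2r, r)` for `r < p`
(if `2r ≥ p` both sides vanish), so the sum over `n < p ^ a` is the `a`-th power of the sum
`S` over `n < p`. Since `p / 2 ≡ -1/2`, `C(2r, r) ≡ (-4) ^ r C(p / 2, r)`, and both sides vanish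
for `p / 2 < r < p`; hence `S ≡ (1 - 4) ^ (p / 2) = (-3) ^ (p / 2)`, which is `1` by Euler's
criterion because `-3 = (2ω + 1) ^ 2` for a cube root of unity `ω ≠ 1`, which exists as
`3 ∣ p - 1`.
-/

open Finset

theorem Finset.sum_range_mul_eq_sum_sum {M : Type*} [AddCommMonoid M] (f : ℕ → M) (m n : ℕ) :
    ∑ i ∈ range (m * n), f i = ∑ q ∈ range n, ∑ r ∈ range m, f (m * q + r) := by
  induction n with
  | zero => simp
  | succ n ih => rw [Nat.mul_succ, sum_range_add, ih, sum_range_succ]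

namespace Nat

variable {p : ℕ} [hp : Fact p.Prime]

theorem centralBinom_cast_eq_zero {r : ℕ} (hpr : p ≤ 2 * r) (hr : r < p) :
    (r.centralBinom : ZMod p) = 0 := by
  rw [ZMod.natCast_eq_zero_iff, centralBinom, two_mul]
  exact hp.out.dvd_choose_add hr hr (by omega)

theorem centralBinom_mul_add_cast (q : ℕ) {r : ℕ} (hr : r < p) :
    ((p * q + r).centralBinom : ZMod p) = q.centralBinom * r.centralBinom := by
  have hp0 : 0 < p := hp.out.pos
  have hsplit : 2 * (p * q + r) = p * (2 * q) + 2 * r := by ring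
  have lucas := (ZMod.natCast_eq_natCast_iff _ _ _).mpr
    (Choose.choose_modEq_choose_mod_mul_choose_div_nat
      (n := 2 * (p * q + r)) (k := p * q + r) (p := p))
  rw [Nat.mul_add_mod, Nat.mod_eq_of_lt hr, Nat.mul_add_div hp0, Nat.div_eq_of_lt hr, add_zero,
    hsplit, Nat.mul_add_mod, Nat.mul_add_div hp0] at lucas
  rcases Nat.lt_or_ge (2 * r) p with h2r | h2r
  · rw [Nat.mod_eq_of_lt h2r, Nat.div_eq_of_lt h2r, add_zero] at lucas
    rw [centralBinom, hsplit, lucas, centralBinom, centralBinom]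
    push_cast
    ring
  -- With a carry, the last base-`p` digit `2 * r - p` of `2 * (p * q + r)` is below `r`.
  · have hmod : 2 * r % p < r := by
      rw [Nat.mod_eq_sub_mod h2r, Nat.mod_eq_of_lt (by omega)]
      omega
    rw [Nat.choose_eq_zero_of_lt hmod] at lucas
    rw [centralBinom, hsplit, lucas, centralBinom_cast_eq_zero h2r hr]
    push_cast
    ring

theorem sum_range_pow_centralBinom_cast (a : ℕ) :
    ∑ n ∈ range (p ^ a), (n.centralBinom : ZMod p) =
      (∑ n ∈ range p, (n.centralBinom : ZMod p)) ^ a := by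
  induction a with
  | zero => simp
  | succ a ih =>
    rw [pow_succ', sum_range_mul_eq_sum_sum, pow_succ, ← ih, sum_mul]
    refine sum_congr rfl fun q _ => ?_
    rw [mul_sum]
    exact sum_congr rfl fun r hr => centralBinom_mul_add_cast q (mem_range.mp hr)

theorem centralBinom_cast_eq_neg_four_pow_mul_choose (hp2 : p ≠ 2) {r : ℕ} (hr : r ≤ p / 2) :
    (r.centralBinom : ZMod p) = (-4) ^ r * (p / 2).choose r := by
  induction r with
  | zero => simp
  | succ r ih =>
    have hhalf := congrArg (Nat.cast : ℕ → ZMod p)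
      (two_mul_div_two_add_one_of_odd (hp.out.eq_two_or_odd'.resolve_left hp2))
    have hr0 : ((r + 1 : ℕ) : ZMod p) ≠ 0 := by
      rw [Ne, ZMod.natCast_eq_zero_iff]
      exact Nat.not_dvd_of_pos_of_lt r.succ_pos (by omega)
    have hcb := congrArg (Nat.cast : ℕ → ZMod p) (succ_mul_centralBinom_succ r)
    have hch := congrArg (Nat.cast : ℕ → ZMod p) (choose_succ_right_eq (p / 2) r)
    push_cast [Nat.cast_sub (show r ≤ p / 2 by omega)] at hhalf hcb hch
    rw [ZMod.natCast_self] at hhalf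
    apply mul_left_cancel₀ hr0
    push_cast
    linear_combination hcb + 2 * (2 * (r : ZMod p) + 1) * ih (by omega)
      - (-4 : ZMod p) ^ (r + 1) * hch
      + 2 * (-4 : ZMod p) ^ r * ((p / 2).choose r : ZMod p) * hhalf

theorem sum_range_centralBinom_cast (hp2 : p ≠ 2) :
    ∑ n ∈ range p, (n.centralBinom : ZMod p) = (-3) ^ (p / 2) := by
  have hlt : p / 2 + 1 ≤ p := by have := hp.out.two_le; omega
  rw [← sum_range_add_sum_Ico _ hlt, sum_eq_zero (s := Ico _ _), add_zero,
    show (-3 : ZMod p) = -4 + 1 by norm_num, add_pow]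
  · refine sum_congr rfl fun r hr => ?_
    rw [centralBinom_cast_eq_neg_four_pow_mul_choose hp2 (Nat.lt_succ_iff.mp (mem_range.mp hr)),
      one_pow, mul_one]
  · intro r hr
    rw [mem_Ico] at hr
    exact centralBinom_cast_eq_zero (by omega) hr.2

end Nat

theorem ZMod.isSquare_neg_three {p : ℕ} [Fact p.Prime] (h3 : p % 3 = 1) :
    IsSquare (-3 : ZMod p) := by
  obtain ⟨ω, hω⟩ := exists_prime_orderOf_dvd_card 3
    (show 3 ∣ Fintype.card (ZMod p)ˣ by rw [ZMod.card_units]; omega)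
  have hω3 : (ω : ZMod p) ^ 3 = 1 := by
    rw [← Units.val_pow_eq_pow_val, ← hω, pow_orderOf_eq_one, Units.val_one]
  have hω1 : (ω : ZMod p) ≠ 1 := by
    intro h
    rw [Units.val_eq_one.mp h, orderOf_one] at hω
    omega
  have hcyc : (ω : ZMod p) ^ 2 + ω + 1 = 0 := by
    have : ((ω : ZMod p) - 1) * ((ω : ZMod p) ^ 2 + ω + 1) = 0 := by linear_combination hω3
    exact (mul_eq_zero.mp this).resolve_left (sub_ne_zero.mpr hω1)
  exact ⟨2 * ω + 1, by linear_combination (-4) * hcyc⟩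

theorem ZMod.neg_three_pow_div_two_eq_one {p : ℕ} [Fact p.Prime] (h3 : p % 3 = 1) :
    (-3 : ZMod p) ^ (p / 2) = 1 := by
  refine (ZMod.euler_criterion p ?_).mp (ZMod.isSquare_neg_three h3)
  intro h
  have : ((3 : ℕ) : ZMod p) = 0 := by push_cast; linear_combination -h
  rw [ZMod.natCast_eq_zero_iff, Nat.prime_dvd_prime_iff_eq Fact.out Nat.prime_three] at this
  omega

theorem stmt0_general (p a : ℕ) (hp : p.Prime) (h3 : p % 3 = 1) :
    (∑ n ∈ Finset.range (p^a), ((2*n).choose n : ℤ)) ≡ 1 [ZMOD (p : ℤ)] := by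
  have := Fact.mk hp
  have hp2 : p ≠ 2 := by omega
  rw [← ZMod.intCast_eq_intCast_iff]
  push_cast
  simp only [← Nat.centralBinom_eq_two_mul_choose]
  rw [Nat.sum_range_pow_centralBinom_cast, Nat.sum_range_centralBinom_cast hp2,
    ZMod.neg_three_pow_div_two_eq_one h3, one_pow]

theorem stmt0 (p a : ℕ) (hp : p.Prime) (h3 : p % 3 = 1) (ha : 1 ≤ a) :
    (∑ n ∈ Finset.range (p^a), ((2*n).choose n : ℤ)) ≡ 1 [ZMOD (p : ℤ)] :=
  stmt0_general p a hp h3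
end

section
/- For any prime p with p ≡ 2 (mod 3), and any odd a ≥ 1, the sum ∑_{n=0}^{p^a - 1} C(2n, n) is congruent to -1 modulo p. -/
/-!
For odd `p` put `M = (p^a - 1)/2`. Modulo `p`, both `C(2n, n)` and `(-4)^n C(M, n)` start with `1`
and have convolution square `4^n` for `n < p^a`: the first by the identity
`∑ C(2i, i) C(2j, j) = 4^n`, the second by Vandermonde and `C(p^a - 1, n) ≡ (-1)^n`. Since `2` is
invertible, such a convolution square root is unique, so the two agree and the sum is
`(1 - 4)^M = (-3)^M`. As `M = (p-1)/2 · (1 + p + ⋯ + p^(a-1))` with an odd second factor, this is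
the Euler criterion value `(-3 | p) = -1` for `p ≡ 2 (mod 3)`. For `p = 2` only the term `n = 0`
is odd.
-/

open Finset

theorem two_mul_sum_antidiagonal_fst_mul {R : Type*} [CommSemiring R] (g : ℕ → R) (n : ℕ) :
    2 * ∑ ij ∈ antidiagonal n, (ij.1 : R) * (g ij.1 * g ij.2) =
      n * ∑ ij ∈ antidiagonal n, g ij.1 * g ij.2 := by
  conv_lhs => rw [two_mul]; enter [2]; rw [← Nat.sum_antidiagonal_swap]
  rw [← sum_add_distrib, mul_sum]
  refine sum_congr rfl fun ij hij => ?_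
  rw [← HasAntidiagonal.mem_antidiagonal.mp hij, Prod.fst_swap, Prod.snd_swap]
  push_cast
  ring

theorem Nat.sum_antidiagonal_centralBinom_mul (n : ℕ) :
    ∑ ij ∈ antidiagonal n, centralBinom ij.1 * centralBinom ij.2 = 4 ^ n := by
  have weighted (n : ℕ) := two_mul_sum_antidiagonal_fst_mul centralBinom n
  simp only [Nat.cast_id] at weighted
  induction n with
  | zero => simp
  | succ n ih =>
    refine Nat.eq_of_mul_eq_mul_left n.succ_pos ?_
    calc (n + 1) * ∑ ij ∈ antidiagonal (n + 1), centralBinom ij.1 * centralBinom ij.2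
        = 2 * ∑ ij ∈ antidiagonal (n + 1), ij.1 * (centralBinom ij.1 * centralBinom ij.2) := by
          rw [weighted]
      _ = 2 * ∑ ij ∈ antidiagonal n,
            2 * (2 * ij.1 + 1) * centralBinom ij.1 * centralBinom ij.2 := by
          rw [Nat.sum_antidiagonal_succ, zero_mul, zero_add]
          congr 1
          refine sum_congr rfl fun ij _ => ?_
          rw [← mul_assoc, succ_mul_centralBinom_succ]
      _ = 4 * (2 * ∑ ij ∈ antidiagonal n, ij.1 * (centralBinom ij.1 * centralBinom ij.2) +
            ∑ ij ∈ antidiagonal n, centralBinom ij.1 * centralBinom ij.2) := by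
          simp only [mul_sum, ← sum_add_distrib]
          refine sum_congr rfl fun ij _ => ?_
          ring
      _ = (n + 1) * 4 ^ (n + 1) := by
          rw [weighted, ih]
          ring

theorem eq_of_forall_sum_antidiagonal_mul_self_eq {R : Type*} [Ring R]
    (h2 : IsLeftRegular (2 : R)) {c d : ℕ → R} (hc : c 0 = 1) (hd : d 0 = 1) {N : ℕ}
    (h : ∀ n < N,
      ∑ ij ∈ antidiagonal n, c ij.1 * c ij.2 = ∑ ij ∈ antidiagonal n, d ij.1 * d ij.2) :
    ∀ n < N, c n = d n := by
  intro n
  induction n using Nat.strong_induction_on with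
  | _ n ih =>
  intro hn
  rcases Nat.eq_zero_or_pos n with rfl | hn0
  · rw [hc, hd]
  -- only the end terms `(0, n)` and `(n, 0)` of the antidiagonal see `c n` and `d n`
  have key : ∑ ij ∈ antidiagonal n, (c ij.1 * c ij.2 - d ij.1 * d ij.2) = 2 * (c n - d n) := by
    rw [sum_eq_add_of_mem (0, n) (n, 0) (by simp) (by simp) (by simp; omega)]
    · simp only [hc, hd]
      noncomm_ring
    · rintro ⟨i, j⟩ hij hne
      rw [HasAntidiagonal.mem_antidiagonal] at hij
      simp only [ne_eq, Prod.mk.injEq] at hne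
      rw [ih i (by omega) (by omega), ih j (by omega) (by omega), sub_self]
  have : 2 * (c n - d n) = 2 * 0 := by rw [← key, sum_sub_distrib, h n hn, sub_self, mul_zero]
  exact sub_eq_zero.mp (h2 this)

theorem natCast_choose_prime_pow_sub_one {p : ℕ} [Fact p.Prime] {a n : ℕ} (hn : n < p ^ a) :
    ((p ^ a - 1).choose n : ZMod p) = (-1) ^ n := by
  induction n with
  | zero => simp
  | succ n ih =>
    obtain ⟨N, hN⟩ : ∃ N, p ^ a = N + 1 := ⟨p ^ a - 1, by omega⟩
    have hdvd : (((N + 1).choose (n + 1) : ℕ) : ZMod p) = 0 := by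
      rw [ZMod.natCast_eq_zero_iff, ← hN]
      exact (Fact.out : p.Prime).dvd_choose_pow n.succ_ne_zero (by omega)
    rw [Nat.choose_succ_succ', Nat.cast_add] at hdvd
    rw [hN, Nat.add_sub_cancel] at ih ⊢
    rw [pow_succ, ← ih (by omega)]
    linear_combination hdvd

theorem add_one_pow_eq_sum_range_of_lt {R : Type*} [CommSemiring R] (x : R) {M N : ℕ}
    (h : M < N) : (x + 1) ^ M = ∑ n ∈ range N, x ^ n * M.choose n := by
  rw [add_pow, ← sum_subset (range_subset_range.mpr h)]
  · simp only [one_pow, mul_one]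
  · intro n _ hn
    rw [mem_range, not_lt] at hn
    rw [Nat.choose_eq_zero_of_lt (by omega), Nat.cast_zero, mul_zero]

theorem neg_three_pow_div_two_of_mod_three_eq_two {p : ℕ} [Fact p.Prime] (hp2 : p ≠ 2)
    (h3 : p % 3 = 2) : (-3 : ZMod p) ^ (p / 2) = -1 := by
  have : Fact (Nat.Prime 3) := ⟨Nat.prime_three⟩
  have hleg3 : legendreSym 3 p = -1 := by
    rw [legendreSym.mod, show (p : ℤ) % (3 : ℕ) = 2 by omega]
    rfl
  -- `(-3 | p) = (-1 | p) (3 | p) = (p | 3)` by quadratic reciprocity, and `2` is a nonresidue mod 3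
  have hleg : legendreSym p (-3) = -1 := by
    rw [show (-3 : ℤ) = -1 * (3 : ℕ) by norm_num, legendreSym.mul, legendreSym.at_neg_one hp2,
      ZMod.χ₄_eq_neg_one_pow (Nat.odd_iff.mp ((Fact.out : p.Prime).odd_of_ne_two hp2)),
      legendreSym.quadratic_reciprocity' (by norm_num) hp2, hleg3, show 3 / 2 = 1 from rfl,
      one_mul, ← mul_assoc, ← pow_add, Even.neg_one_pow ⟨_, rfl⟩, one_mul]
  have h := legendreSym.eq_pow p (-3)
  rw [hleg] at h
  exact_mod_cast h.symm

theorem pow_eq_neg_one_of_pow_div_two_eq_neg_one {R : Type*} [Monoid R] [HasDistribNeg R]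
    {x : R} {p : ℕ} (hp : Odd p) (hx : x ^ (p / 2) = -1) {a M : ℕ} (ha : Odd a)
    (hM : 2 * M + 1 = p ^ a) : x ^ M = -1 := by
  obtain ⟨q, hq⟩ := id hp
  have hgeom := geom_sum_mul_add (2 * q) a
  rw [← hq] at hgeom
  set t := ∑ i ∈ range a, p ^ i
  have hMt : M = p / 2 * t := by
    rw [show p / 2 = q by omega]
    linarith
  have ht : Odd t := by
    rw [odd_sum_iff_odd_card_odd, filter_true_of_mem fun i _ => hp.pow, card_range]
    exact ha
  rw [hMt, pow_mul, hx, ht.neg_one_pow]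

theorem natCast_centralBinom_eq_neg_four_pow_mul_choose {p : ℕ} [Fact p.Prime] (hp2 : p ≠ 2)
    {a M : ℕ} (hM : 2 * M + 1 = p ^ a) {n : ℕ} (hn : n < p ^ a) :
    (n.centralBinom : ZMod p) = (-4) ^ n * M.choose n := by
  have h2 : IsLeftRegular (2 : ZMod p) := IsLeftCancelMulZero.mul_left_cancel_of_ne_zero <|
    Ring.two_ne_zero <| (ZMod.ringChar_zmod_n p).symm ▸ hp2
  refine eq_of_forall_sum_antidiagonal_mul_self_eq h2 (c := fun n => (n.centralBinom : ZMod p))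
    (d := fun n => (-4) ^ n * M.choose n) (by simp) (by simp) (fun n hn => ?_) n hn
  have hc : ∑ ij ∈ antidiagonal n, (ij.1.centralBinom : ZMod p) * ij.2.centralBinom = 4 ^ n :=
    mod_cast congrArg (Nat.cast (R := ZMod p)) (Nat.sum_antidiagonal_centralBinom_mul n)
  have hd : ∑ ij ∈ antidiagonal n,
      (-4 : ZMod p) ^ ij.1 * M.choose ij.1 * ((-4) ^ ij.2 * M.choose ij.2) = 4 ^ n := by
    calc _ = (-4 : ZMod p) ^ n * ((M + M).choose n : ℕ) := by
          rw [Nat.add_choose_eq, Nat.cast_sum, mul_sum]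
          refine sum_congr rfl fun ij hij => ?_
          rw [← HasAntidiagonal.mem_antidiagonal.mp hij, pow_add]
          push_cast
          ring
      _ = 4 ^ n := by
          rw [show M + M = p ^ a - 1 by omega, natCast_choose_prime_pow_sub_one hn, ← mul_pow]
          norm_num
  exact hc.trans hd.symm

theorem sum_range_natCast_centralBinom_zmod_two {N : ℕ} (hN : 0 < N) :
    ∑ n ∈ range N, (n.centralBinom : ZMod 2) = 1 := by
  rw [sum_eq_single_of_mem 0 (mem_range.mpr hN), Nat.centralBinom_zero, Nat.cast_one]
  intro n _ hn
  exact (ZMod.natCast_eq_zero_iff _ _).mpr <|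
    Nat.two_dvd_centralBinom_of_one_le (Nat.pos_of_ne_zero hn)

theorem stmt1_general (p a : ℕ) (hp : p.Prime) (h3 : p % 3 = 2) (hodd : Odd a) :
    (∑ n ∈ Finset.range (p^a), ((2*n).choose n : ℤ)) ≡ -1 [ZMOD (p : ℤ)] := by
  have : Fact p.Prime := ⟨hp⟩
  rw [← ZMod.intCast_eq_intCast_iff]
  push_cast
  simp only [← Nat.centralBinom_eq_two_mul_choose]
  rcases eq_or_ne p 2 with rfl | hp2
  · exact sum_range_natCast_centralBinom_zmod_two (pow_pos two_pos a)
  obtain ⟨M, hM⟩ : Odd (p ^ a) := (hp.odd_of_ne_two hp2).pow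
  calc ∑ n ∈ range (p ^ a), (n.centralBinom : ZMod p)
      = ∑ n ∈ range (p ^ a), (-4 : ZMod p) ^ n * M.choose n := sum_congr rfl fun n hn =>
        natCast_centralBinom_eq_neg_four_pow_mul_choose hp2 hM.symm (mem_range.mp hn)
    _ = (-4 + 1) ^ M := (add_one_pow_eq_sum_range_of_lt _ (by omega)).symm
    _ = -1 := by
        rw [show (-4 : ZMod p) + 1 = -3 by norm_num]
        exact pow_eq_neg_one_of_pow_div_two_eq_neg_one (hp.odd_of_ne_two hp2)
          (neg_three_pow_div_two_of_mod_three_eq_two hp2 h3) hodd hM.symm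

theorem stmt1 (p a : ℕ) (hp : p.Prime) (h3 : p % 3 = 2) (ha : 1 ≤ a) (hodd : Odd a) :
    (∑ n ∈ Finset.range (p^a), ((2*n).choose n : ℤ)) ≡ -1 [ZMOD (p : ℤ)] :=
  stmt1_general p a hp h3 hodd
end

section
/- For any prime p with p ≡ 1 (mod 3), any a ≥ 1, and any natural number d ≤ p^a with d ≡ 0 (mod 3), the sum ∑_{n=0}^{p^a - 1} C(2n, n+d) is congruent to 1 modulo p. -/
/-!
With `F = ∑_{n<N} X^(N-1-n) (X+1)^(2n)`, the sum `∑_{n<N} C(2n, n+d)` is the coefficient of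
`X^(N-1+d)` in `F`, and `F (X² + X + 1) = (X+1)^(2N) - X^N` telescopes. For `N = p^a` the
Frobenius turns the right side into `1 + X^N + X^(2N)` modulo `p`. Multiplying by `X - 1`
gives `F (X³ - 1) = (1 + X^N + X^(2N)) (X - 1)`, so the coefficients of `F` in degrees
divisible by 3 stay equal to `F₀ = 1` until degree `2N - 2`, which covers `N - 1 + d`.
-/

open Polynomial Finset

namespace Polynomial

noncomputable def binomSumPoly (R : Type*) [CommRing R] (N : ℕ) : R[X] :=
  ∑ n ∈ range N, X ^ (N - 1 - n) * (X + 1) ^ (2 * n)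

variable {R : Type*} [CommRing R]

theorem coeff_binomSumPoly (N d : ℕ) :
    (binomSumPoly R N).coeff (N - 1 + d) = ∑ n ∈ range N, ((2 * n).choose (n + d) : R) := by
  rw [binomSumPoly, finsetSum_coeff]
  refine sum_congr rfl fun n hn => ?_
  rw [mem_range] at hn
  rw [show N - 1 + d = (n + d) + (N - 1 - n) by omega, coeff_X_pow_mul, coeff_X_add_one_pow]

theorem binomSumPoly_mul (N : ℕ) :
    binomSumPoly R N * (X ^ 2 + X + 1) = (X + 1) ^ (2 * N) - X ^ N := by
  induction N with
  | zero => simp [binomSumPoly]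
  | succ N ih =>
    have hshift : ∑ n ∈ range N, (X : R[X]) ^ (N + 1 - 1 - n) * (X + 1) ^ (2 * n)
        = X * binomSumPoly R N := by
      rw [binomSumPoly, mul_sum]
      refine sum_congr rfl fun n hn => ?_
      rw [mem_range] at hn
      rw [← mul_assoc, ← pow_succ', show N + 1 - 1 - n = N - 1 - n + 1 by omega]
    rw [binomSumPoly, sum_range_succ, hshift, Nat.add_sub_cancel, Nat.sub_self, pow_zero, one_mul]
    linear_combination (X : R[X]) * ih

theorem binomSumPoly_mul_of_expChar (p a : ℕ) [ExpChar R p] :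
    binomSumPoly R (p ^ a) * (X ^ 2 + X + 1) = 1 + X ^ p ^ a + X ^ (2 * p ^ a) := by
  have frobenius : ((X : R[X]) + 1) ^ p ^ a = X ^ p ^ a + 1 := by
    rw [add_pow_expChar_pow, one_pow]
  rw [binomSumPoly_mul, mul_comm 2, pow_mul, frobenius]
  ring

theorem coeff_add_three_of_mul_eq {F G : R[X]} (h : F * (X ^ 2 + X + 1) = G) (m : ℕ) :
    F.coeff (m + 3) = F.coeff m + G.coeff (m + 3) - G.coeff (m + 2) := by
  have h' : F * X ^ 3 - F = G * X - G := by linear_combination (X - 1 : R[X]) * h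
  have := congrArg (coeff · (m + 3)) h'
  simp only [coeff_sub, coeff_mul_X_pow, coeff_mul_X] at this
  linear_combination -this

theorem coeff_three_mul_eq_one_of_mul_eq {F : R[X]} {q : ℕ} (hq : q % 3 = 1)
    (h : F * (X ^ 2 + X + 1) = 1 + X ^ q + X ^ (2 * q)) (j : ℕ) (hj : 3 * j ≤ 2 * q - 2) :
    F.coeff (3 * j) = 1 := by
  have coeff_rhs : ∀ k, k ≠ 0 → k ≠ q → k ≠ 2 * q →
      ((1 : R[X]) + X ^ q + X ^ (2 * q)).coeff k = 0 := by
    intro k h0 h1 h2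
    simp [coeff_one, coeff_X_pow, h0, h1, h2]
  induction j with
  | zero =>
    have := congrArg (coeff · 0) h
    simp only [mul_coeff_zero] at this
    simpa [coeff_one, coeff_X_pow, show 0 ≠ q by omega, show q ≠ 0 by omega] using this
  | succ j ih =>
    rw [show 3 * (j + 1) = 3 * j + 3 by ring, coeff_add_three_of_mul_eq h,
      coeff_rhs _ (by omega) (by omega) (by omega), coeff_rhs _ (by omega) (by omega) (by omega),
      ih (by omega)]
    ring

end Polynomial

theorem stmt3_general (p a d : ℕ) (hp : p.Prime) (h3 : p % 3 = 1)
    (hd : d ≤ p ^ a) (hd3 : d % 3 = 0) :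
    (∑ n ∈ Finset.range (p^a), ((2*n).choose (n + d) : ℤ)) ≡ 1 [ZMOD (p : ℤ)] := by
  have := Fact.mk hp
  have hq3 : p ^ a % 3 = 1 := by rw [Nat.pow_mod, h3, one_pow, Nat.one_mod]
  obtain ⟨j, hj⟩ : 3 ∣ p ^ a - 1 + d := by omega
  have hcoeff := coeff_three_mul_eq_one_of_mul_eq hq3
    (binomSumPoly_mul_of_expChar (R := ZMod p) p a) j (by omega)
  rw [← hj, coeff_binomSumPoly] at hcoeff
  refine (ZMod.intCast_eq_intCast_iff _ _ _).mp ?_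
  push_cast
  exact hcoeff

theorem stmt3 (p a d : ℕ) (hp : p.Prime) (h3 : p % 3 = 1) (ha : 1 ≤ a)
    (hd : d ≤ p ^ a) (hd3 : d % 3 = 0) :
    (∑ n ∈ Finset.range (p^a), ((2*n).choose (n + d) : ℤ)) ≡ 1 [ZMOD (p : ℤ)] :=
  stmt3_general p a d hp h3 hd hd3
end

section
/- For any prime p with p ≡ 1 (mod 3), any a ≥ 1, and any natural number d ≤ p^a with d ≡ 2 (mod 3), the sum ∑_{n=0}^{p^a - 1} C(2n, n+d) is congruent to -1 modulo p. -/
/-!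
The sum is the coefficient of `X ^ (N - 1 + d)`, `N = p ^ a`, in
`P = ∑_{k < N} (1 + X) ^ (2 k) X ^ (N - 1 - k)`, and `P (1 + X + X²) = (1 + X) ^ (2 N) - X ^ N`
is a difference of `N`-th powers. In characteristic `p` Frobenius turns it into
`1 + X ^ N + X ^ (2 N)`, which for `N = 3 t + 1` is `1 + X + X²` times an explicit sparse
polynomial; so `P` is that polynomial, and its coefficient in degree `N + 1 + 3 s` is `-1`.
-/

open Polynomial Finset

variable (R : Type*)

noncomputable def binomialGenPoly [CommSemiring R] (N : ℕ) : R[X] :=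
  ∑ k ∈ range N, (1 + X) ^ (2 * k) * X ^ (N - 1 - k)

noncomputable def trinomialQuotient [CommRing R] (t : ℕ) : R[X] :=
  ∑ k ∈ range (2 * t + 1), X ^ (3 * k) - (X + X ^ (3 * t + 2)) * ∑ k ∈ range t, X ^ (3 * k)

variable {R}

theorem coeff_binomialGenPoly [CommSemiring R] (N d : ℕ) :
    (binomialGenPoly R N).coeff (N - 1 + d) = ∑ n ∈ range N, ((2 * n).choose (n + d) : R) := by
  rw [binomialGenPoly, finsetSum_coeff]
  refine sum_congr rfl fun k hk => ?_
  have hkN : k < N := mem_range.mp hk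
  rw [coeff_mul_X_pow', if_pos (by omega), show N - 1 + d - (N - 1 - k) = k + d by omega,
    coeff_one_add_X_pow]

theorem binomialGenPoly_mul [CommRing R] (N : ℕ) :
    binomialGenPoly R N * (1 + X + X ^ 2) = (1 + X) ^ (2 * N) - X ^ N := by
  have h := geom_sum₂_mul ((1 + X : R[X]) ^ 2) X N
  simp only [← pow_mul] at h
  rw [binomialGenPoly, show (1 + X + X ^ 2 : R[X]) = (1 + X) ^ 2 - X by ring, h]

theorem one_add_X_pow_two_mul_sub_X_pow [CommRing R] (p : ℕ) [Fact p.Prime] [CharP R p]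
    (a : ℕ) :
    (1 + X : R[X]) ^ (2 * p ^ a) - X ^ p ^ a = 1 + X ^ p ^ a + X ^ (2 * p ^ a) := by
  rw [mul_comm, pow_mul, pow_mul, add_pow_char_pow, one_pow]
  ring

theorem trinomialQuotient_mul [CommRing R] (t : ℕ) :
    trinomialQuotient R t * (1 + X + X ^ 2) = 1 + X ^ (3 * t + 1) + X ^ (2 * (3 * t + 1)) := by
  refine (monic_X_sub_C (1 : R)).isRegular.right ?_
  have hA := geom_sum_mul (X ^ 3 : R[X]) (2 * t + 1)
  have hB := geom_sum_mul (X ^ 3 : R[X]) t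
  simp only [← pow_mul] at hA hB
  calc trinomialQuotient R t * (1 + X + X ^ 2) * (X - C 1)
      = (∑ k ∈ range (2 * t + 1), X ^ (3 * k)) * (X ^ 3 - 1)
        - (X + X ^ (3 * t + 2)) * ((∑ k ∈ range t, X ^ (3 * k)) * (X ^ 3 - 1)) := by
        rw [trinomialQuotient, C_1]; ring
    _ = (1 + X ^ (3 * t + 1) + X ^ (2 * (3 * t + 1))) * (X - C 1) := by
        rw [hA, hB, C_1]; ring

theorem coeff_trinomialQuotient [CommRing R] {s t : ℕ} (hst : s < t) :
    (trinomialQuotient R t).coeff (3 * t + 3 * s + 2) = -1 := by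
  have hA : (∑ k ∈ range (2 * t + 1), X ^ (3 * k) : R[X]).coeff (3 * t + 3 * s + 2) = 0 := by
    rw [finsetSum_coeff]
    exact sum_eq_zero fun k _ => by rw [coeff_X_pow, if_neg (by omega)]
  have hB : (X * ∑ k ∈ range t, X ^ (3 * k) : R[X]).coeff (3 * t + 3 * s + 2) = 0 := by
    rw [mul_sum, finsetSum_coeff]
    exact sum_eq_zero fun k _ => by rw [← pow_succ', coeff_X_pow, if_neg (by omega)]
  have hC : (X ^ (3 * t + 2) * ∑ k ∈ range t, X ^ (3 * k) : R[X]).coeff (3 * t + 3 * s + 2)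
      = 1 := by
    rw [mul_sum, finsetSum_coeff, sum_eq_single_of_mem s (mem_range.mpr hst)]
    · rw [← pow_add, coeff_X_pow, if_pos (by omega)]
    · intro k _ hks
      rw [← pow_add, coeff_X_pow, if_neg (by omega)]
  rw [trinomialQuotient, add_mul, ← sub_sub, coeff_sub, coeff_sub, hA, hB, hC]
  ring

theorem sum_range_choose_two_mul_eq_neg_one [CommRing R] (p : ℕ) [Fact p.Prime] [CharP R p]
    {a d : ℕ} (hpa : p ^ a % 3 = 1) (hd : d ≤ p ^ a) (hd3 : d % 3 = 2) :
    ∑ n ∈ range (p ^ a), ((2 * n).choose (n + d) : R) = -1 := by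
  obtain ⟨t, ht⟩ : ∃ t, p ^ a = 3 * t + 1 := ⟨p ^ a / 3, by omega⟩
  obtain ⟨s, hs⟩ : ∃ s, d = 3 * s + 2 := ⟨d / 3, by omega⟩
  have hP : binomialGenPoly R (p ^ a) = trinomialQuotient R t := by
    have hmonic : (1 + X + X ^ 2 : R[X]).Monic := by monicity!
    refine hmonic.isRegular.right ?_
    dsimp only
    rw [binomialGenPoly_mul, one_add_X_pow_two_mul_sub_X_pow, trinomialQuotient_mul, ← ht]
  rw [← coeff_binomialGenPoly, hP, show p ^ a - 1 + d = 3 * t + 3 * s + 2 by omega,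
    coeff_trinomialQuotient (by omega)]

theorem stmt4_general (p a d : ℕ) (hp : p.Prime) (h3 : p % 3 = 1)
    (hd : d ≤ p ^ a) (hd3 : d % 3 = 2) :
    (∑ n ∈ Finset.range (p^a), ((2*n).choose (n + d) : ℤ)) ≡ -1 [ZMOD (p : ℤ)] := by
  have : Fact p.Prime := ⟨hp⟩
  rw [← ZMod.intCast_eq_intCast_iff]
  push_cast
  have hpa : p ^ a % 3 = 1 := by rw [Nat.pow_mod, h3, one_pow, Nat.one_mod]
  exact sum_range_choose_two_mul_eq_neg_one p hpa hd hd3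

theorem stmt4 (p a d : ℕ) (hp : p.Prime) (h3 : p % 3 = 1) (ha : 1 ≤ a)
    (hd : d ≤ p ^ a) (hd3 : d % 3 = 2) :
    (∑ n ∈ Finset.range (p^a), ((2*n).choose (n + d) : ℤ)) ≡ -1 [ZMOD (p : ℤ)] :=
  stmt4_general p a d hp h3 hd hd3
end

section
/- For any prime p with p ≡ 1 (mod 3), any a ≥ 1, and any natural number d ≤ p^a with d ≡ 1 (mod 3), the sum ∑_{n=0}^{p^a - 1} C(2n, n+d) is congruent to 0 modulo p. -/
/-!
Write `S d = ∑_{n < N} C(2n, n+d)`. Applying Pascal's rule twice and telescoping gives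
`S d + S (d+1) + S (d+2) = C(2N, N+d+1)`. For `N = p^a` Lucas' theorem makes
`C(2N, N+e)` divisible by `p` whenever `0 < e < N`, so subtracting two consecutive instances of the
identity shows `S d ≡ S (d+3) (mod p)` for `d + 3 ≤ N`. Since `S N = 0` and `d ≡ 1 ≡ p^a (mod 3)`,
stepping from `d` up to `N` in steps of three gives the claim.
-/

open Finset

namespace Nat

theorem choose_add_two_add_two (m k : ℕ) :
    (m + 2).choose (k + 2) = m.choose k + 2 * m.choose (k + 1) + m.choose (k + 2) := by
  rw [choose_succ_succ (m + 1) (k + 1), choose_succ_succ m k, choose_succ_succ m (k + 1)]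
  ring

theorem Prime.dvd_choose_pow_mul {p : ℕ} (hp : p.Prime) (a m : ℕ) {k : ℕ} (hk : ¬p ^ a ∣ k) :
    p ∣ (p ^ a * m).choose k := by
  have := Fact.mk hp
  induction a generalizing k with
  | zero => simp at hk
  | succ a ih =>
    have lucas :=
      Choose.choose_modEq_choose_mod_mul_choose_div_nat (p := p) (n := p ^ (a + 1) * m) (k := k)
    rw [pow_succ', mul_assoc, Nat.mul_mod_right, Nat.mul_div_cancel_left _ hp.pos] at lucas
    rw [← Nat.modEq_zero_iff_dvd, pow_succ', mul_assoc]
    refine lucas.trans ?_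
    by_cases hkp : k % p = 0
    · have hk' : ¬p ^ a ∣ k / p := by
        rintro ⟨c, hc⟩
        exact hk ⟨c, by rw [← Nat.div_mul_cancel (Nat.dvd_of_mod_eq_zero hkp), hc]; ring⟩
      simpa [hkp, Nat.modEq_zero_iff_dvd] using ih hk'
    · simp [Nat.choose_eq_zero_of_lt (Nat.pos_of_ne_zero hkp), Nat.ModEq.refl]

end Nat

def shiftedCentralBinomSum (N d : ℕ) : ℤ :=
  ∑ n ∈ range N, ((2 * n).choose (n + d) : ℤ)

namespace shiftedCentralBinomSum

theorem add_add_eq_choose (N d : ℕ) :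
    shiftedCentralBinomSum N d + shiftedCentralBinomSum N (d + 1) +
        shiftedCentralBinomSum N (d + 2) = (2 * N).choose (N + (d + 1)) := by
  induction N with
  | zero => simp [shiftedCentralBinomSum]
  | succ N ih =>
    simp only [shiftedCentralBinomSum, sum_range_succ] at ih ⊢
    have pascal := Nat.choose_add_two_add_two (2 * N) (N + d)
    rw [show 2 * (N + 1) = 2 * N + 2 by ring, show N + 1 + (d + 1) = N + d + 2 by ring, pascal]
    push_cast
    linear_combination ih

theorem self (N : ℕ) : shiftedCentralBinomSum N N = 0 :=
  sum_eq_zero fun n hn => by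
    rw [Nat.choose_eq_zero_of_lt (by simp at hn; omega), Nat.cast_zero]

theorem modEq_add_three {p a : ℕ} (hp : p.Prime) {e : ℕ} (he : e + 3 ≤ p ^ a) :
    shiftedCentralBinomSum (p ^ a) (e + 3) ≡ shiftedCentralBinomSum (p ^ a) e [ZMOD p] := by
  have dvd_choose : ∀ i, 0 < i → i < p ^ a → (p : ℤ) ∣ (2 * p ^ a).choose (p ^ a + i) := by
    intro i hi0 hi
    refine Int.natCast_dvd_natCast.mpr ?_
    rw [mul_comm]
    exact hp.dvd_choose_pow_mul a 2 fun h =>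
      Nat.not_dvd_of_pos_of_lt hi0 hi ((Nat.dvd_add_right (dvd_refl _)).mp h)
  have h₁ := add_add_eq_choose (p ^ a) e
  have h₂ : _ = ((2 * p ^ a).choose (p ^ a + (e + 2)) : ℤ) := add_add_eq_choose (p ^ a) (e + 1)
  have difference : shiftedCentralBinomSum (p ^ a) e - shiftedCentralBinomSum (p ^ a) (e + 3) =
      (2 * p ^ a).choose (p ^ a + (e + 1)) - (2 * p ^ a).choose (p ^ a + (e + 2)) := by
    rw [← h₁, ← h₂]
    ring
  rw [Int.modEq_iff_dvd, difference]
  exact dvd_sub (dvd_choose (e + 1) (by omega) (by omega))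
    (dvd_choose (e + 2) (by omega) (by omega))

theorem pow_modEq_zero {p a d : ℕ} (hp : p.Prime) (hd : d ≤ p ^ a) (hd3 : d ≡ p ^ a [MOD 3]) :
    shiftedCentralBinomSum (p ^ a) d ≡ 0 [ZMOD p] := by
  obtain ⟨j, hj⟩ : 3 ∣ p ^ a - d := (Nat.modEq_iff_dvd' hd).mp hd3
  clear hd3
  induction j generalizing d with
  | zero => rw [show d = p ^ a by omega, self]
  | succ j ih =>
    exact (modEq_add_three hp (by omega)).symm.trans (ih (d := d + 3) (by omega) (by omega))

end shiftedCentralBinomSum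

theorem stmt5_general (p a d : ℕ) (hp : p.Prime) (h3 : p % 3 = 1)
    (hd : d ≤ p ^ a) (hd3 : d % 3 = 1) :
    (∑ n ∈ Finset.range (p^a), ((2*n).choose (n + d) : ℤ)) ≡ 0 [ZMOD (p : ℤ)] := by
  have hpow : p ^ a % 3 = 1 := by rw [Nat.pow_mod, h3, one_pow, Nat.one_mod]
  exact shiftedCentralBinomSum.pow_modEq_zero hp hd (hd3.trans hpow.symm)

theorem stmt5 (p a d : ℕ) (hp : p.Prime) (h3 : p % 3 = 1) (ha : 1 ≤ a)
    (hd : d ≤ p ^ a) (hd3 : d % 3 = 1) :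
    (∑ n ∈ Finset.range (p^a), ((2*n).choose (n + d) : ℤ)) ≡ 0 [ZMOD (p : ℤ)] :=
  stmt5_general p a d hp h3 hd hd3
end

section
/- For any prime p with p ≡ 2 (mod 3) and any odd a ≥ 1, and any natural number d ≤ p^a with d ≡ 1 (mod 3), the sum ∑_{n=0}^{p^a - 1} C(2n, n+d) is congruent to 1 modulo p. -/
/-!
Write `S e = ∑_{n < N} C(2n, n + e)` with `N = p^a`. Applying Pascal's rule twice gives
`S e + S (e+1) + S (e+2) = C(2N, N+e+1)` by induction on `N`. Modulo `p`,
`(1 + X)^(2N) = (1 + X^N)^2`, so this right-hand side vanishes for `0 ≤ e ≤ N-3` and equals `1`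
for `e = N-1`, where `S N = S (N+1) = 0`. Hence `S` is `3`-periodic on `[0, N-1]` with `S (N-1) ≡ 1`,
and `N ≡ 2 (mod 3)` when `p ≡ 2 (mod 3)` and `a` is odd, so `S d ≡ 1` for `d ≡ 1 (mod 3)`.
-/

open Finset Polynomial

lemma Nat.choose_add_two_add_two_s6 (n k : ℕ) :
    (n + 2).choose (k + 2) = n.choose k + 2 * n.choose (k + 1) + n.choose (k + 2) := by
  rw [Nat.choose_succ_succ', Nat.choose_succ_succ', Nat.choose_succ_succ' n (k + 1)]
  ring

def chooseSum (N e : ℕ) : ℕ := ∑ n ∈ range N, (2 * n).choose (n + e)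

lemma chooseSum_eq_zero_of_le {N e : ℕ} (h : N ≤ e) : chooseSum N e = 0 :=
  sum_eq_zero fun n hn => Nat.choose_eq_zero_of_lt (by simp at hn; omega)

lemma chooseSum_add_chooseSum_add_chooseSum (N e : ℕ) :
    chooseSum N e + chooseSum N (e + 1) + chooseSum N (e + 2) = (2 * N).choose (N + e + 1) := by
  induction N with
  | zero => simp [chooseSum]
  | succ N ih =>
    have pascal : (2 * (N + 1)).choose (N + 1 + e + 1) = (2 * N).choose (N + e)
        + 2 * (2 * N).choose (N + e + 1) + (2 * N).choose (N + e + 2) := by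
      rw [← Nat.choose_add_two_add_two_s6]
      ring_nf
    simp only [chooseSum, sum_range_succ, ← add_assoc] at ih ⊢
    omega

lemma Nat.cast_choose_two_mul_prime_pow_eq_zero {p a j : ℕ} [Fact p.Prime] (hj : 0 < j)
    (hjN : j < p ^ a) : ((2 * p ^ a).choose (p ^ a + j) : ZMod p) = 0 := by
  have frobenius : (X + 1 : (ZMod p)[X]) ^ (2 * p ^ a) = X ^ (2 * p ^ a) + 2 * X ^ p ^ a + 1 := by
    rw [mul_comm, pow_mul, add_pow_char_pow, one_pow]
    ring
  have := congrArg (coeff · (p ^ a + j)) frobenius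
  simp only [coeff_X_add_one_pow, coeff_add, coeff_X_pow, coeff_one] at this
  rw [this]
  simp [show p ^ a + j ≠ 2 * p ^ a by omega, show j ≠ 0 by omega]

lemma eq_of_forall_le_eq_add_three {α : Type*} {f : ℕ → α} {M d : ℕ}
    (hf : ∀ e, e + 3 ≤ M → f e = f (e + 3)) (hd : d ≤ M) (hmod : d % 3 = M % 3) : f d = f M := by
  obtain ⟨k, rfl⟩ : ∃ k, M = d + 3 * k := ⟨(M - d) / 3, by omega⟩
  induction k generalizing d with
  | zero => rfl
  | succ k ih =>
    rw [hf d (by omega), ih (d := d + 3) (fun e he => hf e (by omega)) (by omega) (by omega)]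
    ring_nf

section ModPrimePow

variable {p a : ℕ} [Fact p.Prime]

lemma cast_chooseSum_eq_add_three {e : ℕ} (he : e + 3 ≤ p ^ a) :
    (chooseSum (p ^ a) e : ZMod p) = chooseSum (p ^ a) (e + 3) := by
  have h₁ := congrArg (Nat.cast : ℕ → ZMod p) (chooseSum_add_chooseSum_add_chooseSum (p ^ a) e)
  have h₂ := congrArg (Nat.cast : ℕ → ZMod p) (chooseSum_add_chooseSum_add_chooseSum (p ^ a) (e + 1))
  rw [add_assoc _ e, Nat.cast_choose_two_mul_prime_pow_eq_zero (by omega) (by omega)] at h₁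
  rw [add_assoc _ (e + 1), Nat.cast_choose_two_mul_prime_pow_eq_zero (by omega) (by omega)] at h₂
  push_cast at h₁ h₂
  linear_combination h₁ - h₂

lemma cast_chooseSum_pred : (chooseSum (p ^ a) (p ^ a - 1) : ZMod p) = 1 := by
  have hN : 0 < p ^ a := pow_pos (Fact.out : p.Prime).pos a
  have h := chooseSum_add_chooseSum_add_chooseSum (p ^ a) (p ^ a - 1)
  rw [chooseSum_eq_zero_of_le (e := p ^ a - 1 + 1) (by omega),
    chooseSum_eq_zero_of_le (e := p ^ a - 1 + 2) (by omega),
    show p ^ a + (p ^ a - 1) + 1 = 2 * p ^ a by omega, Nat.choose_self, add_zero, add_zero] at h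
  rw [h, Nat.cast_one]

end ModPrimePow

lemma pow_mod_three_of_odd {p a : ℕ} (hp : p % 3 = 2) (ha : Odd a) : p ^ a % 3 = 2 := by
  obtain ⟨m, rfl⟩ := ha
  rw [Nat.pow_mod, hp, pow_succ, pow_mul, Nat.mul_mod, Nat.pow_mod]
  norm_num

theorem stmt6_general (p a d : ℕ) (hp : p.Prime) (h3 : p % 3 = 2) (hodd : Odd a)
    (hd : d ≤ p ^ a) (hd3 : d % 3 = 1) :
    (∑ n ∈ Finset.range (p^a), ((2*n).choose (n + d) : ℤ)) ≡ 1 [ZMOD (p : ℤ)] := by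
  have : Fact p.Prime := ⟨hp⟩
  have hN3 := pow_mod_three_of_odd h3 hodd
  rw [← ZMod.intCast_eq_intCast_iff, Int.cast_one]
  push_cast
  rw [← Nat.cast_sum, ← chooseSum, ← cast_chooseSum_pred (p := p) (a := a)]
  exact eq_of_forall_le_eq_add_three (f := fun e => (chooseSum (p ^ a) e : ZMod p))
    (fun e he => cast_chooseSum_eq_add_three (by omega)) (by omega) (by omega)

theorem stmt6 (p a d : ℕ) (hp : p.Prime) (h3 : p % 3 = 2) (ha : 1 ≤ a) (hodd : Odd a)
    (hd : d ≤ p ^ a) (hd3 : d % 3 = 1) :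
    (∑ n ∈ Finset.range (p^a), ((2*n).choose (n + d) : ℤ)) ≡ 1 [ZMOD (p : ℤ)] :=
  stmt6_general p a d hp h3 hodd hd hd3
end

section
/- For any prime p with p ≡ 2 (mod 3) and any even a ≥ 1, and any natural number d ≤ p^a with d ≡ 2 (mod 3), the sum ∑_{n=0}^{p^a - 1} C(2n, n+d) is congruent to -1 modulo p. -/
/-!
Write `c j` for the coefficients of `1 / (1 + x + x²)` and `A M m` for the coefficient of `x^m` in
`(1 + x)^M / (1 + x + x²)`. Pascal's rule for `A`, together with `A M (k+2) + A M (k+1) + A M k =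
C(M, k+2)`, makes `∑_{n<N} C(2n, n+d)` telescope to `A (2N) (N+d-1) - c (d-1)`. For `N = p^a` we have
`(1 + x)^(2N) ≡ 1 + 2x^N + x^(2N) (mod p)`, so modulo `p` only `c (N+d-1) + 2 c (d-1)` survives, and
`N ≡ 1`, `d ≡ 2 (mod 3)` evaluate the sum to `0 + 2·(-1) - (-1) = -1`.
-/

open Finset Polynomial

/-- The coefficients of `1 / (1 + x + x²) = (1 - x) / (1 - x³)`. -/
def invTrinomialCoeff (j : ℕ) : ℤ := if j % 3 = 0 then 1 else if j % 3 = 1 then -1 else 0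

lemma invTrinomialCoeff_add_add (j : ℕ) :
    invTrinomialCoeff j + invTrinomialCoeff (j + 1) + invTrinomialCoeff (j + 2) = 0 := by
  unfold invTrinomialCoeff
  have h1 : (j + 1) % 3 = (j % 3 + 1) % 3 := by omega
  have h2 : (j + 2) % 3 = (j % 3 + 2) % 3 := by omega
  rcases (by omega : j % 3 = 0 ∨ j % 3 = 1 ∨ j % 3 = 2) with h | h | h <;>
    rw [h1, h2, h] <;> norm_num

/-- The coefficient of `x^m` in `(1 + x)^M / (1 + x + x²)`. -/
def binomDivTrinomialCoeff (M m : ℕ) : ℤ :=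
  ∑ i ∈ range (m + 1), invTrinomialCoeff (m - i) * (M.choose i : ℤ)

lemma binomDivTrinomialCoeff_zero_left (m : ℕ) :
    binomDivTrinomialCoeff 0 m = invTrinomialCoeff m := by
  unfold binomDivTrinomialCoeff
  rw [sum_eq_single 0 (fun i _ hi => by simp [Nat.choose_eq_zero_of_lt (Nat.pos_of_ne_zero hi)])
    (by simp)]
  simp

lemma binomDivTrinomialCoeff_succ_succ (M m : ℕ) :
    binomDivTrinomialCoeff (M + 1) (m + 1) =
      binomDivTrinomialCoeff M (m + 1) + binomDivTrinomialCoeff M m := by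
  unfold binomDivTrinomialCoeff
  rw [sum_range_succ' (fun i => invTrinomialCoeff (m + 1 - i) * ((M + 1).choose i : ℤ)),
    sum_range_succ' (fun i => invTrinomialCoeff (m + 1 - i) * (M.choose i : ℤ))]
  simp only [Nat.succ_sub_succ, Nat.choose_succ_succ, Nat.choose_zero_right, Nat.sub_zero,
    Nat.cast_add, Nat.cast_one, mul_add, sum_add_distrib]
  ring

/-- Multiplying back by `1 + x + x²` recovers `(1 + x)^M`. -/
lemma binomDivTrinomialCoeff_add_add (M k : ℕ) :
    binomDivTrinomialCoeff M (k + 2) + binomDivTrinomialCoeff M (k + 1) +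
      binomDivTrinomialCoeff M k = (M.choose (k + 2) : ℤ) := by
  have h2 : binomDivTrinomialCoeff M (k + 2) =
      ∑ i ∈ range (k + 1), invTrinomialCoeff (k - i + 2) * (M.choose i : ℤ)
        - M.choose (k + 1) + M.choose (k + 2) := by
    unfold binomDivTrinomialCoeff
    rw [sum_range_succ, sum_range_succ, Nat.sub_self, show k + 2 - (k + 1) = 1 by omega]
    rw [sum_congr rfl fun i hi => by rw [show k + 2 - i = k - i + 2 by grind]]
    simp only [invTrinomialCoeff, Nat.zero_mod, Nat.one_mod, one_ne_zero, ↓reduceIte, one_mul,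
      neg_mul, add_left_inj]
    ring
  have h1 : binomDivTrinomialCoeff M (k + 1) =
      ∑ i ∈ range (k + 1), invTrinomialCoeff (k - i + 1) * (M.choose i : ℤ)
        + M.choose (k + 1) := by
    unfold binomDivTrinomialCoeff
    rw [sum_range_succ, Nat.sub_self]
    rw [sum_congr rfl fun i hi => by rw [show k + 1 - i = k - i + 1 by grind]]
    simp [invTrinomialCoeff]
  have h0 : ∑ i ∈ range (k + 1), (invTrinomialCoeff (k - i) + invTrinomialCoeff (k - i + 1)
      + invTrinomialCoeff (k - i + 2)) * (M.choose i : ℤ) = 0 :=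
    sum_eq_zero fun i _ => by rw [invTrinomialCoeff_add_add, zero_mul]
  simp only [add_mul, sum_add_distrib] at h0
  rw [h2, h1, binomDivTrinomialCoeff]
  linarith

theorem sum_range_choose_two_mul_add_two (e N : ℕ) :
    ∑ n ∈ range N, ((2 * n).choose (n + (e + 2)) : ℤ) =
      binomDivTrinomialCoeff (2 * N) (N + e + 1) - invTrinomialCoeff (e + 1) := by
  induction N with
  | zero => simp [binomDivTrinomialCoeff_zero_left]
  | succ N ih =>
    have step := binomDivTrinomialCoeff_add_add (2 * N) (N + e)
    rw [sum_range_succ, ih, show 2 * (N + 1) = 2 * N + 1 + 1 by ring,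
      show N + 1 + e + 1 = N + e + 1 + 1 by ring, binomDivTrinomialCoeff_succ_succ,
      binomDivTrinomialCoeff_succ_succ, binomDivTrinomialCoeff_succ_succ (2 * N) (N + e)]
    rw [show N + (e + 2) = N + e + 2 by ring] at *
    linarith

lemma choose_two_mul_prime_pow (p a i : ℕ) [Fact p.Prime] :
    ((2 * p ^ a).choose i : ZMod p) =
      (if i = 0 then 1 else 0) + 2 * (if i = p ^ a then 1 else 0) +
        (if i = 2 * p ^ a then 1 else 0) := by
  have frobenius : (X + 1 : (ZMod p)[X]) ^ p ^ a = X ^ p ^ a + 1 := by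
    simp [add_pow_char_pow]
  have square : (X + 1 : (ZMod p)[X]) ^ (2 * p ^ a) = X ^ (2 * p ^ a) + 2 * X ^ p ^ a + 1 := by
    rw [mul_comm, pow_mul, frobenius, pow_mul]
    ring
  rw [← coeff_X_add_one_pow, square]
  simp only [coeff_add, coeff_X_pow, coeff_one, coeff_ofNat_mul]
  ring

lemma binomDivTrinomialCoeff_two_mul_prime_pow (p a m : ℕ) [Fact p.Prime]
    (hm : p ^ a ≤ m) (hm' : m < 2 * p ^ a) :
    (binomDivTrinomialCoeff (2 * p ^ a) m : ZMod p) =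
      invTrinomialCoeff m + 2 * invTrinomialCoeff (m - p ^ a) := by
  unfold binomDivTrinomialCoeff
  push_cast
  simp only [choose_two_mul_prime_pow, mul_add, mul_ite, mul_one, mul_zero, sum_add_distrib,
    sum_ite_eq', mem_range]
  rw [if_pos (by omega), if_pos (by omega), if_neg (by omega), Nat.sub_zero]
  ring

theorem stmt7_general (p a d : ℕ) (hp : p.Prime) (h3 : p % 3 = 2) (heven : Even a)
    (hd : d ≤ p ^ a) (hd3 : d % 3 = 2) :
    (∑ n ∈ Finset.range (p^a), ((2*n).choose (n + d) : ℤ)) ≡ -1 [ZMOD (p : ℤ)] := by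
  have : Fact p.Prime := ⟨hp⟩
  obtain ⟨e, rfl⟩ : ∃ e, d = e + 2 := ⟨d - 2, by omega⟩
  have hq : p ^ a % 3 = 1 := by
    obtain ⟨b, rfl⟩ := heven
    have hp2 : p ^ 2 % 3 = 1 := by rw [Nat.pow_mod, h3]
    rw [← two_mul, pow_mul, Nat.pow_mod, hp2, one_pow, Nat.one_mod]
  have hc₁ : invTrinomialCoeff (e + 1) = -1 := by
    simp [invTrinomialCoeff, (by omega : (e + 1) % 3 = 1)]
  have hc₂ : invTrinomialCoeff (p ^ a + e + 1) = 0 := by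
    simp [invTrinomialCoeff, (by omega : (p ^ a + e + 1) % 3 = 2)]
  rw [sum_range_choose_two_mul_add_two, ← ZMod.intCast_eq_intCast_iff, Int.cast_sub,
    binomDivTrinomialCoeff_two_mul_prime_pow p a _ (by omega) (by omega),
    show p ^ a + e + 1 - p ^ a = e + 1 by omega, hc₁, hc₂]
  push_cast
  ring

theorem stmt7 (p a d : ℕ) (hp : p.Prime) (h3 : p % 3 = 2) (ha : 1 ≤ a) (heven : Even a)
    (hd : d ≤ p ^ a) (hd3 : d % 3 = 2) :
    (∑ n ∈ Finset.range (p^a), ((2*n).choose (n + d) : ℤ)) ≡ -1 [ZMOD (p : ℤ)] :=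
  stmt7_general p a d hp h3 heven hd hd3
end

section
/- For any prime p with p ≡ 1 (mod 3) and any a ≥ 1, the sum ∑_{n=0}^{2p^a - 1} C(2n, n) is congruent to 3 modulo p. -/
/-!
By Lucas' theorem, `C(2(pq + r), pq + r) ≡ C(2q, q) C(2r, r) (mod p)` for `r < p` (both sides
vanish when `2r ≥ p`), so `S(pN) ≡ S(N) S(p)` for `S(N) = ∑_{n<N} C(2n, n)`, and hence
`S(2p^a) ≡ S(2) S(p)^a = 3 S(p)^a`. Since `p / 2 ≡ -1/2`, `C(2r, r) ≡ (-4)^r C(p / 2, r)` for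
`r < p`, so the binomial theorem gives `S(p) ≡ (-3)^((p-1)/2)`, which by Euler's criterion is `1`
because `-3 = (2ω + 1)^2` for a primitive cube root of unity `ω ∈ 𝔽_p`.
-/

open Finset Nat

namespace ZMod

variable {p : ℕ} [Fact p.Prime]

theorem natCast_ne_zero_of_pos_of_lt {k : ℕ} (h0 : 0 < k) (hk : k < p) : (k : ZMod p) ≠ 0 := by
  rw [Ne, natCast_eq_zero_iff]
  exact fun h => absurd (Nat.le_of_dvd h0 h) (by omega)

theorem choose_mul_add_cast {m q s r : ℕ} (hs : s < p) (hr : r < p) :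
    ((p * m + s).choose (p * q + r) : ZMod p) = s.choose r * m.choose q := by
  have hp : 0 < p := (Fact.out : p.Prime).pos
  have h := (intCast_eq_intCast_iff _ _ _).mpr
    (Choose.choose_modEq_choose_mod_mul_choose_div (p := p) (n := p * m + s) (k := p * q + r))
  simp only [Nat.mul_add_mod, Nat.mod_eq_of_lt hs, Nat.mod_eq_of_lt hr, Nat.mul_add_div hp,
    Nat.div_eq_of_lt hs, Nat.div_eq_of_lt hr, add_zero] at h
  exact_mod_cast h

theorem centralBinom_mul_add_cast_eq_zero {q r : ℕ} (h1 : p ≤ 2 * r) (h2 : r < p) :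
    (centralBinom (p * q + r) : ZMod p) = 0 := by
  have h : 2 * (p * q + r) = p * (2 * q + 1) + (2 * r - p) := by
    have : p * (2 * q + 1) = 2 * (p * q) + p := by ring
    omega
  rw [centralBinom_eq_two_mul_choose, h, choose_mul_add_cast (by omega) h2,
    Nat.choose_eq_zero_of_lt (by omega), Nat.cast_zero, zero_mul]

theorem centralBinom_mul_add_cast {q r : ℕ} (hr : r < p) :
    (centralBinom (p * q + r) : ZMod p) = centralBinom q * centralBinom r := by
  rcases Nat.lt_or_ge (2 * r) p with h | h
  · have e : 2 * (p * q + r) = p * (2 * q) + 2 * r := by ring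
    rw [centralBinom_eq_two_mul_choose, e, choose_mul_add_cast h hr, mul_comm,
      ← centralBinom_eq_two_mul_choose, ← centralBinom_eq_two_mul_choose]
  · have hr0 := centralBinom_mul_add_cast_eq_zero (q := 0) h hr
    rw [mul_zero, zero_add] at hr0
    rw [centralBinom_mul_add_cast_eq_zero h hr, hr0, mul_zero]

theorem sum_range_mul_centralBinom_cast (N : ℕ) :
    ∑ n ∈ range (p * N), (centralBinom n : ZMod p) =
      (∑ n ∈ range N, (centralBinom n : ZMod p)) * ∑ r ∈ range p, (centralBinom r : ZMod p) := by
  induction N with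
  | zero => simp
  | succ N ih =>
    rw [Nat.mul_succ, sum_range_add, ih, sum_range_succ, add_mul,
      mul_sum _ _ (centralBinom N : ZMod p)]
    exact congrArg _ (sum_congr rfl fun r hr => centralBinom_mul_add_cast (mem_range.mp hr))

theorem two_mul_succ_mul_choose_half_succ (hp2 : p ≠ 2) (k : ℕ) :
    (2 * (k + 1) * (p / 2).choose (k + 1) : ZMod p) = -(2 * k + 1) * (p / 2).choose k := by
  rcases Nat.lt_or_ge k (p / 2 + 1) with hk | hk
  · have hodd : 2 * (p / 2 - k) + 2 * k + 1 = p := by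
      have := (Fact.out : p.Prime).eq_two_or_odd
      omega
    have h0 : ((2 * (p / 2 - k) + 2 * k + 1 : ℕ) : ZMod p) = 0 := by
      rw [hodd, natCast_self]
    have hc := congrArg (Nat.cast : ℕ → ZMod p) (Nat.choose_succ_right_eq (p / 2) k)
    push_cast [Nat.cast_sub (by omega : k ≤ p / 2)] at h0 hc
    linear_combination 2 * hc + (p / 2).choose k * h0
  · rw [Nat.choose_eq_zero_of_lt (by omega), Nat.choose_eq_zero_of_lt (by omega)]
    simp

theorem centralBinom_cast_eq_neg_four_pow_mul_choose (hp2 : p ≠ 2) {k : ℕ} (hk : k < p) :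
    (centralBinom k : ZMod p) = (-4) ^ k * (p / 2).choose k := by
  induction k with
  | zero => simp
  | succ k ih =>
    apply mul_left_cancel₀ (natCast_ne_zero_of_pos_of_lt k.succ_pos hk)
    have hrec := congrArg (Nat.cast : ℕ → ZMod p) (succ_mul_centralBinom_succ k)
    push_cast at hrec ⊢
    linear_combination hrec + 2 * (2 * k + 1) * ih (by omega) +
      2 * (-4) ^ k * two_mul_succ_mul_choose_half_succ hp2 k

theorem sum_range_centralBinom_cast (hp2 : p ≠ 2) :
    ∑ r ∈ range p, (centralBinom r : ZMod p) = (-3) ^ (p / 2) := by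
  have hp := (Fact.out : p.Prime).two_le
  rw [sum_congr rfl fun r hr => centralBinom_cast_eq_neg_four_pow_mul_choose hp2 (mem_range.mp hr),
    ← sum_subset (range_subset_range.mpr (by omega : p / 2 + 1 ≤ p)) fun r _ hr => by
      rw [Nat.choose_eq_zero_of_lt (by simpa using hr), Nat.cast_zero, mul_zero]]
  rw [show (-3 : ZMod p) = -4 + 1 by norm_num, add_pow]
  simp

theorem neg_three_pow_half_eq_one (h3 : p % 3 = 1) : (-3 : ZMod p) ^ (p / 2) = 1 := by
  have : Fact (Nat.Prime 3) := ⟨Nat.prime_three⟩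
  obtain ⟨u, hu⟩ := exists_prime_orderOf_dvd_card (G := (ZMod p)ˣ) 3
    (by rw [card_units]; omega)
  have hu3 : (u : ZMod p) ^ 3 = 1 := by
    rw [← Units.val_pow_eq_pow_val, ← hu, pow_orderOf_eq_one, Units.val_one]
  have hu1 : (u : ZMod p) ≠ 1 := fun h => by
    rw [Units.val_eq_one.mp h, orderOf_one] at hu
    omega
  have hω : (u : ZMod p) ^ 2 + u + 1 = 0 := by
    have h : ((u : ZMod p) - 1) * ((u : ZMod p) ^ 2 + u + 1) = 0 := by linear_combination hu3
    exact (mul_eq_zero.mp h).resolve_left (sub_ne_zero.mpr hu1)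
  have h3ne : (-3 : ZMod p) ≠ 0 := by
    rw [neg_ne_zero, ← Nat.cast_ofNat, Ne, natCast_eq_zero_iff]
    intro h
    have := (Nat.prime_dvd_prime_iff_eq (Fact.out) Nat.prime_three).mp h
    omega
  exact (euler_criterion p h3ne).mp ⟨2 * u + 1, by linear_combination -4 * hω⟩

end ZMod

theorem stmt8_general (p a : ℕ) (hp : p.Prime) (h3 : p % 3 = 1) :
    (∑ n ∈ Finset.range (2 * p^a), ((2*n).choose n : ℤ)) ≡ 3 [ZMOD (p : ℤ)] := by
  have : Fact p.Prime := ⟨hp⟩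
  have hp2 : p ≠ 2 := by omega
  have hT : ∑ r ∈ range p, (centralBinom r : ZMod p) = 1 := by
    rw [ZMod.sum_range_centralBinom_cast hp2, ZMod.neg_three_pow_half_eq_one h3]
  have hS : ∑ n ∈ range (2 * p ^ a), (centralBinom n : ZMod p) = 3 := by
    induction a with
    | zero => norm_num [sum_range_succ, centralBinom_eq_two_mul_choose]
    | succ a ih =>
      rw [show 2 * p ^ (a + 1) = p * (2 * p ^ a) by ring,
        ZMod.sum_range_mul_centralBinom_cast, ih, hT, mul_one]
  rw [← ZMod.intCast_eq_intCast_iff]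
  push_cast [← centralBinom_eq_two_mul_choose]
  exact hS

theorem stmt8 (p a : ℕ) (hp : p.Prime) (h3 : p % 3 = 1) (ha : 1 ≤ a) :
    (∑ n ∈ Finset.range (2 * p^a), ((2*n).choose n : ℤ)) ≡ 3 [ZMOD (p : ℤ)] :=
  stmt8_general p a hp h3
end

section
/- For any prime p > 2 and any a ≥ 1, the triple sum ∑_{m1=0}^{p^a-1} ∑_{m2=0}^{p^a-1} ∑_{m3=0}^{p^a-1} (m1+m2+m3)!/(m1! m2! m3!) is congruent to 1 modulo p. -/
/-!
Lucas' theorem extends from binomial to multinomial coefficients: modulo `p`,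
`multinomial m ≡ multinomial (m % p) * multinomial (m / p)` componentwise. Splitting each
`m i < N * p` into its last base-`p` digit and the rest therefore factors the box sum
`S N = ∑_{m < N} multinomial m` as `S (N * p) = S N * S p`, so `S (p ^ a) = (S p) ^ a`.
In `S p` the terms with `∑ m i ≥ p` vanish, because `p` divides `(∑ m i)!` but no `(m i)!`;
grouping the rest by `n = ∑ m i` gives `S p = ∑_{n < p} 3 ^ n = (3 ^ p - 1) / 2 ≡ 1` by Fermat,
as `2` is a unit.
-/

open Finset

namespace Nat

variable {p : ℕ}

theorem sum_mod_eq_and_sum_div_eq {α : Type*} {s : Finset α} {f : α → ℕ}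
    (h : ∑ i ∈ s, f i % p < p) :
    (∑ i ∈ s, f i) % p = ∑ i ∈ s, f i % p ∧
      (∑ i ∈ s, f i) / p = ∑ i ∈ s, f i / p := by
  have hsum : ∑ i ∈ s, f i = p * ∑ i ∈ s, f i / p + ∑ i ∈ s, f i % p := by
    rw [mul_sum, ← sum_add_distrib]
    exact sum_congr rfl fun i _ => (Nat.div_add_mod (f i) p).symm
  rw [hsum, Nat.mul_add_mod, Nat.mod_eq_of_lt h, Nat.mul_add_div (by omega), Nat.div_eq_of_lt h,
    add_zero]
  exact ⟨rfl, rfl⟩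

theorem filter_sum_eq_piAntidiag {ι : Type*} [Fintype ι] [DecidableEq ι] {N n : ℕ}
    (hn : n < N) :
    {r ∈ {r ∈ Fintype.piFinset (fun _ : ι => range N) | ∑ i, r i < N} | ∑ i, r i = n} =
      piAntidiag univ n := by
  ext r
  simp only [mem_filter, Fintype.mem_piFinset, mem_range, mem_piAntidiag, mem_univ,
    implies_true, and_true]
  constructor
  · exact fun h => h.2
  · rintro rfl
    exact ⟨⟨fun i => (single_le_sum (fun j _ => Nat.zero_le (r j)) (mem_univ i)).trans_lt hn,
      hn⟩, rfl⟩

variable [hp : Fact p.Prime]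

theorem cast_add_choose_eq_mul (u v : ℕ) :
    (((u + v).choose u : ℕ) : ZMod p) =
      ((u % p + v % p).choose (u % p) : ℕ) * ((u / p + v / p).choose (u / p) : ℕ) := by
  have hp0 := hp.out.pos
  have lucas := (ZMod.intCast_eq_intCast_iff _ _ _).mpr
    (Choose.choose_modEq_choose_mod_mul_choose_div (n := u + v) (k := u) (p := p))
  push_cast at lucas
  rw [lucas]
  -- With a carry both sides vanish: the last digit of `u + v` drops below `u % p`, and
  -- `p ∣ (u % p + v % p).choose (u % p)` by Kummer.
  by_cases carry : p ≤ u % p + v % p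
  · have hu := Nat.mod_lt u hp0
    have hv := Nat.mod_lt v hp0
    have hmod : (u + v) % p = u % p + v % p - p := by
      rw [Nat.add_mod, Nat.mod_eq_sub_mod carry, Nat.mod_eq_of_lt (by omega)]
    have hdvd := hp.out.dvd_choose_add hu hv carry
    have hlt : u % p + v % p - p < u % p := by omega
    rw [hmod, Nat.choose_eq_zero_of_lt hlt, (ZMod.natCast_eq_zero_iff _ _).mpr hdvd]
    simp
  · rw [Nat.add_mod, Nat.mod_eq_of_lt (not_le.mp carry), Nat.add_div hp0, if_neg carry, add_zero]

theorem cast_multinomial_eq_zero {α : Type*} {s : Finset α} {f : α → ℕ}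
    (hf : ∀ i ∈ s, f i < p) (hs : p ≤ ∑ i ∈ s, f i) : (multinomial s f : ZMod p) = 0 := by
  rw [ZMod.natCast_eq_zero_iff]
  have hdvd : p ∣ (∏ i ∈ s, (f i)!) * multinomial s f := by
    rw [multinomial_spec]
    exact (hp.out.dvd_factorial).mpr hs
  refine (hp.out.prime.dvd_or_dvd hdvd).resolve_left fun h => ?_
  obtain ⟨i, hi, hdvd_i⟩ := (Prime.dvd_finsetProd_iff hp.out.prime _).mp h
  exact absurd ((hp.out.dvd_factorial).mp hdvd_i) (not_le.mpr (hf i hi))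

theorem cast_multinomial_eq_mul {α : Type*} (s : Finset α) (f : α → ℕ) :
    (multinomial s f : ZMod p) =
      multinomial s (fun i => f i % p) * multinomial s (fun i => f i / p) := by
  classical
  induction s using Finset.induction_on with
  | empty => simp
  | insert a s ha ih =>
    simp only [multinomial_insert ha, Nat.cast_mul, ih]
    rw [cast_add_choose_eq_mul]
    by_cases carry : ∑ i ∈ s, f i % p < p
    · obtain ⟨hmod, hdiv⟩ := sum_mod_eq_and_sum_div_eq carry
      rw [hmod, hdiv]
      ring
    · rw [cast_multinomial_eq_zero (fun i _ => Nat.mod_lt _ hp.out.pos) (not_lt.mp carry)]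
      ring

variable {ι : Type*} [Fintype ι] [DecidableEq ι]

theorem sum_multinomial_piFinset_range_mul (N : ℕ) :
    ∑ m ∈ Fintype.piFinset (fun _ : ι => range (N * p)), (multinomial univ m : ZMod p) =
      (∑ q ∈ Fintype.piFinset (fun _ : ι => range N), (multinomial univ q : ZMod p)) *
        ∑ r ∈ Fintype.piFinset (fun _ : ι => range p), (multinomial univ r : ZMod p) := by
  have hp0 := hp.out.pos
  rw [sum_mul_sum, ← sum_product']
  refine sum_nbij' (fun m => (fun i => m i / p, fun i => m i % p))
    (fun qr i => p * qr.1 i + qr.2 i) ?_ ?_ ?_ ?_ ?_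
  · intro m hm
    simp only [mem_product, Fintype.mem_piFinset, mem_range] at hm ⊢
    exact ⟨fun i => (Nat.div_lt_iff_lt_mul hp0).mpr (hm i), fun i => Nat.mod_lt _ hp0⟩
  · intro qr hqr
    simp only [mem_product, Fintype.mem_piFinset, mem_range] at hqr ⊢
    exact fun i => Nat.mul_add_lt_mul_of_lt_of_lt (hqr.1 i) (hqr.2 i)
  · intro m _
    funext i
    exact Nat.div_add_mod (m i) p
  · intro qr hqr
    simp only [mem_product, Fintype.mem_piFinset, mem_range] at hqr
    ext i
    · exact (Nat.mul_add_div hp0 _ _).trans (by rw [Nat.div_eq_of_lt (hqr.2 i), add_zero])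
    · exact (Nat.mul_add_mod _ _ _).trans (Nat.mod_eq_of_lt (hqr.2 i))
  · intro m _
    rw [cast_multinomial_eq_mul, mul_comm]

theorem sum_multinomial_piFinset_range_pow (a : ℕ) :
    ∑ m ∈ Fintype.piFinset (fun _ : ι => range (p ^ a)), (multinomial univ m : ZMod p) =
      (∑ r ∈ Fintype.piFinset (fun _ : ι => range p), (multinomial univ r : ZMod p)) ^ a := by
  induction a with
  | zero => simp [range_one, Fintype.piFinset_singleton, multinomial]
  | succ a ih => rw [pow_succ, sum_multinomial_piFinset_range_mul, ih, pow_succ]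

theorem sum_multinomial_piFinset_range_prime (hι : (Fintype.card ι : ZMod p) ≠ 1) :
    ∑ r ∈ Fintype.piFinset (fun _ : ι => range p), (multinomial univ r : ZMod p) = 1 := by
  calc ∑ r ∈ Fintype.piFinset (fun _ : ι => range p), (multinomial univ r : ZMod p)
      = ∑ r ∈ Fintype.piFinset (fun _ : ι => range p) with ∑ i, r i < p,
          (multinomial univ r : ZMod p) := by
        refine (sum_filter_of_ne fun r hr hne => not_le.mp fun hsum => hne ?_).symm
        exact cast_multinomial_eq_zero
          (fun i _ => mem_range.mp (Fintype.mem_piFinset.mp hr i)) hsum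
    _ = ∑ n ∈ range p, ∑ r ∈ piAntidiag univ n, (multinomial univ r : ZMod p) := by
        rw [← sum_fiberwise_of_maps_to (g := fun r : ι → ℕ => ∑ i, r i) (t := range p)
          fun r hr => mem_range.mpr (mem_filter.mp hr).2]
        exact sum_congr rfl fun n hn => by rw [filter_sum_eq_piAntidiag (mem_range.mp hn)]
    _ = ∑ n ∈ range p, (Fintype.card ι : ZMod p) ^ n := by
        refine sum_congr rfl fun n _ => ?_
        simpa using (sum_pow_eq_sum_piAntidiag univ (fun _ => (1 : ZMod p)) n).symm
    _ = 1 := by rw [geom_sum_eq hι, ZMod.pow_card, div_self (sub_ne_zero.mpr hι)]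

end Nat

theorem stmt18_general (p a : ℕ) (hp : p.Prime) (hp2 : 2 < p) :
    (∑ m ∈ Fintype.piFinset (fun _ : Fin 3 => Finset.range (p^a)),
      (Nat.multinomial Finset.univ m : ℤ)) ≡ 1 [ZMOD (p : ℤ)] := by
  have := Fact.mk hp
  have three_ne_one : ((Fintype.card (Fin 3) : ℕ) : ZMod p) ≠ 1 := by
    rw [Fintype.card_fin, ne_comm, ← Nat.cast_one, Ne, ZMod.natCast_eq_natCast_iff,
      Nat.modEq_iff_dvd' (by norm_num)]
    exact fun h => absurd (Nat.le_of_dvd two_pos h) (not_le.mpr hp2)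
  rw [← ZMod.intCast_eq_intCast_iff]
  push_cast
  rw [Nat.sum_multinomial_piFinset_range_pow,
    Nat.sum_multinomial_piFinset_range_prime three_ne_one, one_pow]

theorem stmt18 (p a : ℕ) (hp : p.Prime) (hp2 : 2 < p) (ha : 1 ≤ a) :
    (∑ m ∈ Fintype.piFinset (fun _ : Fin 3 => Finset.range (p^a)),
      (Nat.multinomial Finset.univ m : ℤ)) ≡ 1 [ZMOD (p : ℤ)] :=
  stmt18_general p a hp hp2
end
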